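/- arXiv:1603.05520 — 2 statements merged into one kernel-verified Lean document; each statement's English description precedes it below -/
import Mathlib

section
/- Let c > 1 be an integer. There is an efficient algorithm that, given a DPSP instance (σ, σ', M, K) and a non-crossing subset M' ⊆ M of demand pairs that violates every constraint in K by a factor of at most c, computes a subset M'' ⊆ M' of at least |M'|/c demand pairs that satisfies all constraints in K. -/
noncomputable section
namespace DPSP

/-- A constraint of the Demand Pair Selection Problem.  The two disjoint directed paths
`σ` and `σ'` are modeled by `Fin a` and `Fin b` with their natural (strict) orders `<`;
all sources of demand pairs lie on `σ = Fin a` and all destinations on `σ' = Fin b`.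
A constraint `(i, x, y, w)` of type `i ∈ {1,2,3,4}` is built by the `i`-th constructor. -/
inductive Con (a b : ℕ) : Type
  | one : Fin a → Fin a → ℕ → Con a b
  | two : Fin b → Fin b → ℕ → Con a b
  | three : Fin a → Fin b → ℕ → Con a b
  | four : Fin a → Fin b → ℕ → Con a b
  deriving DecidableEq

/-- Well-formedness of a constraint: the weight satisfies `w ≥ 1`, and for type-1 and
type-2 constraints the two endpoints satisfy `x ≺ y`. -/
def WellFormed {a b : ℕ} : Con a b → Prop
  | .one x y w => x < y ∧ 1 ≤ w
  | .two x y w => x < y ∧ 1 ≤ w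
  | .three _ _ w => 1 ≤ w
  | .four _ _ w => 1 ≤ w

/-- A set `M'` of demand pairs satisfies a constraint. -/
def Satisfies {a b : ℕ} (M' : Finset (Fin a × Fin b)) : Con a b → Prop
  | .one x y w => (M'.filter fun p => x ≤ p.1 ∧ p.1 ≤ y).card ≤ w
  | .two x y w => (M'.filter fun p => x ≤ p.2 ∧ p.2 ≤ y).card ≤ w
  | .three x y w => (M'.filter fun p => p.1 ≤ x ∧ y ≤ p.2).card ≤ w
  | .four x y w => (M'.filter fun p => x ≤ p.1 ∧ p.2 ≤ y).card ≤ w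

/-- Two demand pairs cross. -/
def Crosses {a b : ℕ} (p q : Fin a × Fin b) : Prop :=
  p.1 = q.1 ∨ p.2 = q.2 ∨ (p.1 < q.1 ∧ q.2 < p.2) ∨ (q.1 < p.1 ∧ p.2 < q.2)

/-- A set of demand pairs is non-crossing iff no two of its pairs cross. -/
def NonCrossing {a b : ℕ} (M' : Finset (Fin a × Fin b)) : Prop :=
  ∀ p ∈ M', ∀ q ∈ M', p ≠ q → ¬ Crosses p q

/-- The optimum of a `DPSP` instance: the maximum cardinality of a non-crossing subset
of `M` satisfying all constraints of `K`. -/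
def opt {a b : ℕ} (M : Finset (Fin a × Fin b)) (K : Finset (Con a b)) : ℕ :=
  sSup {n : ℕ | ∃ M' ⊆ M, NonCrossing M' ∧ (∀ con ∈ K, Satisfies M' con) ∧ M'.card = n}

end DPSP

namespace DPSP

/-- A set `M'` of demand pairs violates a constraint by a factor of at most `c`. -/
def ViolatesByAtMost {a b : ℕ} (M' : Finset (Fin a × Fin b)) (c : ℕ) : Con a b → Prop
  | .one x y w => (M'.filter fun p => x ≤ p.1 ∧ p.1 ≤ y).card ≤ c * w
  | .two x y w => (M'.filter fun p => x ≤ p.2 ∧ p.2 ≤ y).card ≤ c * w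
  | .three x y w => (M'.filter fun p => p.1 ≤ x ∧ y ≤ p.2).card ≤ c * w
  | .four x y w => (M'.filter fun p => x ≤ p.1 ∧ p.2 ≤ y).card ≤ c * w


end DPSP

/-!
Because `M'` is non-crossing, listing its pairs by source also lists them by destination, so
every constraint counts a contiguous block of consecutive pairs. Keeping the pairs at positions
`0, c, 2c, …` keeps `⌈|M'| / c⌉` of them, and a block of at most `c * w` consecutive pairs
contains at most `w` kept ones.
-/

open Finset

namespace Nat

theorem le_mul_card_filter_dvd_range {c : ℕ} (hc : 0 < c) (n : ℕ) :
    n ≤ c * #{k ∈ range n | c ∣ k} := by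
  have hcount := count_modEq_card n hc 0
  simp only [count_eq_card_filter_range, modEq_zero_iff_dvd] at hcount
  have := div_add_mod n c
  have := mod_lt n hc
  rw [hcount, mul_add]
  split_ifs <;> simp only [zero_mod, mul_one, mul_zero] at * <;> omega

theorem card_filter_dvd_le_of_ordConnected {u : Finset ℕ} (hu : (u : Set ℕ).OrdConnected)
    {c w : ℕ} (h : #u ≤ c * w) : #{k ∈ u | c ∣ k} ≤ w := by
  set v := {k ∈ u | c ∣ k}
  obtain hv | hv := v.eq_empty_or_nonempty
  · simp [hv]
  set m := v.min' hv
  set M := v.max' hv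
  have hm : m ∈ v := v.min'_mem hv
  have hM : M ∈ v := v.max'_mem hv
  have hIcc : M + 1 - m ≤ #u := by
    rw [← card_Icc]
    refine card_le_card fun k hk => ?_
    exact_mod_cast hu.out (mem_filter.1 hm).1 (mem_filter.1 hM).1 (by simpa using hk)
  have hv_sub : v ⊆ (range ((M - m) / c + 1)).image (m + c * ·) := by
    intro k hk
    have hmk : m ≤ k := v.min'_le k hk
    have hkM : k ≤ M := v.le_max' k hk
    have hdvd : c ∣ k - m := dvd_sub (mem_filter.1 hk).2 (mem_filter.1 hm).2
    refine mem_image.2 ⟨(k - m) / c, mem_range.2 (lt_succ_of_le ?_), ?_⟩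
    · exact Nat.div_le_div_right (by omega)
    · rw [Nat.mul_div_cancel' hdvd]; omega
  have hspan : c * ((M - m) / c) < c * w := by
    have := mul_div_le (M - m) c
    have := v.min'_le M hM
    omega
  calc #v ≤ (M - m) / c + 1 :=
        (card_le_card hv_sub).trans (Finset.card_image_le.trans (card_range _).le)
    _ ≤ w := Nat.lt_of_mul_lt_mul_left hspan

end Nat

namespace Finset

section RankBy

variable {ι α : Type*} [LinearOrder α]

/-- The position, counted from `0`, of `x` in `s` listed by increasing key `f`. -/
def rankBy (s : Finset ι) (f : ι → α) (x : ι) : ℕ := #{y ∈ s | f y < f x}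

variable {s : Finset ι} {f : ι → α} {x y : ι}

theorem rankBy_lt_rankBy (hx : x ∈ s) (h : f x < f y) : s.rankBy f x < s.rankBy f y := by
  refine card_lt_card ⟨monotone_filter_right s fun _ _ hz => hz.trans h, fun hsub => ?_⟩
  exact lt_irrefl _ (mem_filter.1 (hsub (mem_filter.2 ⟨hx, h⟩))).2

theorem le_of_rankBy_le (hx : x ∈ s) (h : s.rankBy f y ≤ s.rankBy f x) : f y ≤ f x :=
  not_lt.1 fun hlt => (rankBy_lt_rankBy hx hlt).not_ge h

theorem rankBy_lt_card (hx : x ∈ s) : s.rankBy f x < #s :=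
  card_lt_card ⟨filter_subset _ s, fun hsub => lt_irrefl _ (mem_filter.1 (hsub hx)).2⟩

theorem injOn_rankBy (hf : Set.InjOn f s) : Set.InjOn (s.rankBy f) s := by
  intro x hx y hy h
  exact hf hx hy ((le_of_rankBy_le hy h.le).antisymm (le_of_rankBy_le hx h.ge))

theorem image_rankBy (hf : Set.InjOn f s) : s.image (s.rankBy f) = range #s :=
  eq_of_subset_of_card_le (fun _ hk => by
      obtain ⟨x, hx, rfl⟩ := mem_image.1 hk
      exact mem_range.2 (rankBy_lt_card hx))
    (by rw [card_range, card_image_of_injOn (injOn_rankBy hf)])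

theorem card_le_mul_card_filter_dvd_rankBy (hf : Set.InjOn f s) {c : ℕ} (hc : 0 < c) :
    #s ≤ c * #{x ∈ s | c ∣ s.rankBy f x} := by
  have h := Nat.le_mul_card_filter_dvd_range hc #s
  rwa [← image_rankBy hf, filter_image,
    card_image_of_injOn ((injOn_rankBy hf).mono (filter_subset _ s))] at h

theorem card_filter_filter_dvd_rankBy_le (hf : Set.InjOn f s) {P : ι → Prop} [DecidablePred P]
    (hP : ∀ x ∈ s, ∀ y ∈ s, ∀ z ∈ s, P x → P y → f x ≤ f z → f z ≤ f y → P z)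
    {c w : ℕ} (h : #{x ∈ s | P x} ≤ c * w) :
    #{x ∈ {x ∈ s | c ∣ s.rankBy f x} | P x} ≤ w := by
  set t := {x ∈ s | P x}
  have hinj : Set.InjOn (s.rankBy f) t := (injOn_rankBy hf).mono (filter_subset _ s)
  have hconn : (t.image (s.rankBy f) : Set ℕ).OrdConnected := by
    refine ⟨?_⟩
    rintro _ hk₁ _ hk₂ k ⟨hk₁k, hkk₂⟩
    obtain ⟨x, hx, rfl⟩ := mem_image.1 hk₁
    obtain ⟨y, hy, rfl⟩ := mem_image.1 hk₂
    obtain ⟨hxs, hPx⟩ := mem_filter.1 hx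
    obtain ⟨hys, hPy⟩ := mem_filter.1 hy
    have hk : k ∈ s.image (s.rankBy f) :=
      image_rankBy hf ▸ mem_range.2 (hkk₂.trans_lt (rankBy_lt_card hys))
    obtain ⟨z, hzs, rfl⟩ := mem_image.1 hk
    exact mem_image_of_mem _ (mem_filter.2 ⟨hzs,
      hP x hxs y hys z hzs hPx hPy (le_of_rankBy_le hzs hk₁k) (le_of_rankBy_le hys hkk₂)⟩)
  have hcard := Nat.card_filter_dvd_le_of_ordConnected hconn
    (c := c) (w := w) ((card_image_of_injOn hinj).trans_le h)
  rwa [filter_image, card_image_of_injOn (hinj.mono (filter_subset _ t)), filter_comm] at hcard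

end RankBy

end Finset

namespace DPSP

section Constraints

variable {a b : ℕ}

theorem NonCrossing.injOn_fst {M' : Finset (Fin a × Fin b)} (hnc : NonCrossing M') :
    Set.InjOn Prod.fst (M' : Set (Fin a × Fin b)) :=
  fun p hp q hq h => by_contra fun hne => hnc p hp q hq hne (Or.inl h)

theorem NonCrossing.snd_le_snd {M' : Finset (Fin a × Fin b)} (hnc : NonCrossing M')
    {p q : Fin a × Fin b} (hp : p ∈ M') (hq : q ∈ M') (h : p.1 ≤ q.1) : p.2 ≤ q.2 := by
  by_contra hlt
  have hne : p ≠ q := fun hpq => (hpq ▸ hlt) le_rfl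
  exact hnc p hp q hq hne
    (Or.inr (Or.inr (Or.inl ⟨h.lt_of_ne (fun h' => hnc p hp q hq hne (Or.inl h')), not_le.1 hlt⟩)))

def Con.Counts : Con a b → Fin a × Fin b → Prop
  | .one x y _, p => x ≤ p.1 ∧ p.1 ≤ y
  | .two x y _, p => x ≤ p.2 ∧ p.2 ≤ y
  | .three x y _, p => p.1 ≤ x ∧ y ≤ p.2
  | .four x y _, p => x ≤ p.1 ∧ p.2 ≤ y

instance (con : Con a b) : DecidablePred con.Counts := fun p =>
  match con with
  | .one x y _ => inferInstanceAs (Decidable (x ≤ p.1 ∧ p.1 ≤ y))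
  | .two x y _ => inferInstanceAs (Decidable (x ≤ p.2 ∧ p.2 ≤ y))
  | .three x y _ => inferInstanceAs (Decidable (p.1 ≤ x ∧ y ≤ p.2))
  | .four x y _ => inferInstanceAs (Decidable (x ≤ p.1 ∧ p.2 ≤ y))

def Con.weight : Con a b → ℕ
  | .one _ _ w | .two _ _ w | .three _ _ w | .four _ _ w => w

theorem satisfies_iff {M' : Finset (Fin a × Fin b)} {con : Con a b} :
    Satisfies M' con ↔ #{p ∈ M' | con.Counts p} ≤ con.weight := by
  cases con <;> rfl

theorem violatesByAtMost_iff {M' : Finset (Fin a × Fin b)} {c : ℕ} {con : Con a b} :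
    ViolatesByAtMost M' c con ↔ #{p ∈ M' | con.Counts p} ≤ c * con.weight := by
  cases con <;> rfl

theorem Con.counts_of_fst_le_of_fst_le {M' : Finset (Fin a × Fin b)} (hnc : NonCrossing M')
    (con : Con a b) :
    ∀ p ∈ M', ∀ q ∈ M', ∀ r ∈ M', con.Counts p → con.Counts q → p.1 ≤ r.1 → r.1 ≤ q.1 →
      con.Counts r := by
  intro p hp q hq r hr hcp hcq hpr hrq
  cases con with
  | one => exact ⟨hcp.1.trans hpr, hrq.trans hcq.2⟩
  | two =>
    exact ⟨hcp.1.trans (hnc.snd_le_snd hp hr hpr), (hnc.snd_le_snd hr hq hrq).trans hcq.2⟩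
  | three => exact ⟨hrq.trans hcq.1, hcp.2.trans (hnc.snd_le_snd hp hr hpr)⟩
  | four => exact ⟨hcp.1.trans hpr, (hnc.snd_le_snd hr hq hrq).trans hcq.2⟩

end Constraints

theorem violation_to_satisfaction_general (a b c : ℕ) (hc : 1 < c)
    (K : Finset (Con a b))
    (M' : Finset (Fin a × Fin b)) (hnc : NonCrossing M')
    (hviol : ∀ con ∈ K, ViolatesByAtMost M' c con) :
    ∃ M'' ⊆ M', M'.card ≤ c * M''.card ∧ ∀ con ∈ K, Satisfies M'' con := by
  refine ⟨{p ∈ M' | c ∣ M'.rankBy Prod.fst p}, filter_subset _ _,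
    card_le_mul_card_filter_dvd_rankBy hnc.injOn_fst (by omega), fun con hcon => ?_⟩
  exact satisfies_iff.2 <| card_filter_filter_dvd_rankBy_le hnc.injOn_fst
    (con.counts_of_fst_le_of_fst_le hnc) (violatesByAtMost_iff.1 (hviol con hcon))

/-- Let `c > 1` be an integer.  Given a `DPSP` instance `(σ, σ', M, K)`
and a non-crossing subset `M' ⊆ M` that violates every constraint of `K` by a factor of
at most `c`, there is a subset `M'' ⊆ M'` of at least `|M'|/c` demand pairs that satisfies
all constraints of `K` (the polynomial-time computability of `M''` is not formalized). -/
theorem violation_to_satisfaction (a b c : ℕ) (hc : 1 < c)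
    (M : Finset (Fin a × Fin b)) (K : Finset (Con a b))
    (hK : ∀ con ∈ K, WellFormed con)
    (M' : Finset (Fin a × Fin b)) (hM'M : M' ⊆ M) (hnc : NonCrossing M')
    (hviol : ∀ con ∈ K, ViolatesByAtMost M' c con) :
    ∃ M'' ⊆ M', M'.card ≤ c * M''.card ∧ ∀ con ∈ K, Satisfies M'' con :=
  violation_to_satisfaction_general a b c hc K M' hnc hviol

end DPSP
end
end

section
/- Let G be a graph and T ⊆ V(G) a set of at least 3 terminals such that every terminal has degree 1 in G and no edge of G connects two terminals. Then for every vertex cut (A,C,B) of G with (A ∪ C) ∩ T ≠ ∅ and (B ∪ C) ∩ T ≠ ∅, there exists a vertex cut (A',C',B') of G with C' ∩ T = ∅, (A' ∪ C') ∩ T ≠ ∅ and (B' ∪ C') ∩ T ≠ ∅, whose sparsity with respect to T is at most the sparsity of (A,C,B). Consequently, when G is planar, composing this reduction with an α_AKR-approximation algorithm for the sparsest vertex cut yields an efficient algorithm computing a vertex cut whose sparsity is within factor α_AKR of the minimum and whose separator C contains no terminals. -/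
noncomputable section

namespace NDP

variable {V : Type}

/-- A set `M` of demand pairs can be (fully) routed in `G`: there is a collection of
pairwise node-disjoint paths, containing one path connecting `s` to `t`
for every demand pair `(s, t) ∈ M`. -/
def Routing (G : SimpleGraph V) (M : Finset (V × V)) : Prop :=
  ∃ P : (m : V × V) → m ∈ M → G.Walk m.1 m.2,
    (∀ m (hm : m ∈ M), (P m hm).IsPath) ∧
    (∀ m (hm : m ∈ M) m' (hm' : m' ∈ M), m ≠ m' →
      ∀ v, v ∈ (P m hm).support → v ∉ (P m' hm').support)

/-- `OPT(G, M)`: the maximum number of demand pairs of `M` that can be routed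
simultaneously via node-disjoint paths in `G`. -/
def ndpOpt (G : SimpleGraph V) (M : Finset (V × V)) : ℕ :=
  sSup {n : ℕ | ∃ M' ⊆ M, Routing G M' ∧ M'.card = n}

/-- There are `m` node-disjoint paths in `G`, each connecting a vertex of `A`
to a vertex of `B`. -/
def DisjointPathsBetween (G : SimpleGraph V) (A B : Set V) (m : ℕ) : Prop :=
  ∃ (a b : Fin m → V) (P : (j : Fin m) → G.Walk (a j) (b j)),
    (∀ j, a j ∈ A) ∧ (∀ j, b j ∈ B) ∧ (∀ j, (P j).IsPath) ∧
    (∀ j j', j ≠ j' → ∀ v, v ∈ (P j).support → v ∉ (P j').support)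

/-- A set `T` of vertices is `α`-well-linked in `G`. -/
def WellLinked (G : SimpleGraph V) (T : Finset V) (α : ℝ) : Prop :=
  ∀ T₁ T₂ : Finset V, T₁ ⊆ T → T₂ ⊆ T → Disjoint T₁ T₂ → T₁.card = T₂.card →
    ∃ m : ℕ, α * (T₁.card : ℝ) ≤ (m : ℝ) ∧
      DisjointPathsBetween G (T₁ : Set V) (T₂ : Set V) m

/-- The set of terminals: all vertices participating in the demand pairs of `M`. -/
def terminals [DecidableEq V] (M : Finset (V × V)) : Finset V :=
  M.image Prod.fst ∪ M.image Prod.snd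

/-- `v` has degree exactly `1` in `G`. -/
def DegreeOne (G : SimpleGraph V) (v : V) : Prop := ∃! u, G.Adj v u

/-- Standing assumption on instances: every terminal participates in exactly one
demand pair (so all `2|M|` terminals are distinct), and every terminal has degree `1`. -/
def ProperInstance [DecidableEq V] (G : SimpleGraph V) (M : Finset (V × V)) : Prop :=
  (terminals M).card = 2 * M.card ∧ ∀ v ∈ terminals M, DegreeOne G v

/-- `H` is a minor of `G`. -/
def IsMinorOf {W : Type} (H : SimpleGraph W) (G : SimpleGraph V) : Prop :=
  ∃ f : W → Set V,
    (∀ w, (f w).Nonempty) ∧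
    (∀ w, (G.induce (f w)).Connected) ∧
    (∀ w w', w ≠ w' → Disjoint (f w) (f w')) ∧
    (∀ w w', H.Adj w w' → ∃ a ∈ f w, ∃ b ∈ f w', G.Adj a b)

/-- Planarity, via Wagner's characterization: no `K₅` minor and no `K₃,₃` minor. -/
def IsPlanar (G : SimpleGraph V) : Prop :=
  ¬ IsMinorOf (SimpleGraph.completeGraph (Fin 5)) G ∧
  ¬ IsMinorOf (completeBipartiteGraph (Fin 3) (Fin 3)) G


/-- `(A, C, B)` is a vertex cut of `G`: a tri-partition of `V(G)` such that no edge of `G`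
has one endpoint in `A` and the other in `B`. -/
def IsVertexCut {V : Type} (G : SimpleGraph V) (A C B : Finset V) : Prop :=
  Disjoint A C ∧ Disjoint A B ∧ Disjoint C B ∧
  (∀ v : V, v ∈ A ∨ v ∈ C ∨ v ∈ B) ∧
  (∀ a ∈ A, ∀ b ∈ B, ¬ G.Adj a b)

/-- The sparsity of a vertex cut `(A, C, B)` with respect to the terminal set `T`:
`|C| / (min(|A ∩ T|, |B ∩ T|) + |C ∩ T|)`. -/
def cutSparsity {V : Type} [DecidableEq V] (A C B T : Finset V) : ℝ :=
  (C.card : ℝ) / ((min ((A ∩ T).card) ((B ∩ T).card) + (C ∩ T).card : ℕ) : ℝ)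


/-! If the cut has sparsity at least `1`, the star of a single terminal `t` (its unique neighbour
`u` separating `t` from the rest) is a terminal-free cut of sparsity exactly `1`. Otherwise
`|C \ T| < min(|A ∩ T|, |B ∩ T|)`, and every terminal of `C` can be moved to the side of
its unique neighbour (to `A` if that neighbour is not in `B`); this keeps the cut valid since
terminals have degree one and are pairwise non-adjacent, removes `|C ∩ T|` from both the
numerator and the denominator of the sparsity, and does not shrink the sides. -/

theorem div_le_add_div_add {c c' m m' : ℕ} (hc' : c' ≤ m) (hm : m ≤ m') :
    (c' : ℝ) / m' ≤ (c' + c : ℕ) / (m + c : ℕ) := by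
  rcases Nat.eq_zero_or_pos m' with rfl | hm'
  · simp only [CharP.cast_eq_zero, div_zero]
    positivity
  rcases Nat.eq_zero_or_pos (m + c) with hmc | hmc
  · obtain rfl : c' = 0 := by omega
    simp only [CharP.cast_eq_zero, zero_div]
    positivity
  rw [div_le_div_iff₀ (by exact_mod_cast hm') (by exact_mod_cast hmc)]
  have hcm : c' * (m + c) ≤ (c' + c) * m' := by nlinarith
  exact_mod_cast hcm

section TerminalFreeCut

open Finset

variable {V : Type} {G : SimpleGraph V}

open Classical in
def adjacentTo (G : SimpleGraph V) (B S : Finset V) : Finset V :=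
  S.filter fun s => ∃ b ∈ B, G.Adj s b

theorem mem_adjacentTo {B S : Finset V} {v : V} :
    v ∈ adjacentTo G B S ↔ v ∈ S ∧ ∃ b ∈ B, G.Adj v b := by
  simp [adjacentTo]

variable [DecidableEq V]

theorem one_le_cutSparsity {A C B T : Finset V}
    (hpos : 0 < min (A ∩ T).card (B ∩ T).card + (C ∩ T).card)
    (hle : min (A ∩ T).card (B ∩ T).card + (C ∩ T).card ≤ C.card) :
    1 ≤ cutSparsity A C B T := by
  rw [cutSparsity, one_le_div (by exact_mod_cast hpos)]
  exact_mod_cast hle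

theorem cutSparsity_denom_pos {A C B T : Finset V}
    (hA : ((A ∪ C) ∩ T).Nonempty) (hB : ((B ∪ C) ∩ T).Nonempty) :
    0 < min (A ∩ T).card (B ∩ T).card + (C ∩ T).card := by
  rw [union_inter_distrib_right] at hA hB
  rcases (C ∩ T).eq_empty_or_nonempty with hC | hC
  · rw [hC, union_empty] at hA hB
    simp [card_pos.2 hA, card_pos.2 hB]
  · exact Nat.add_pos_right _ (card_pos.2 hC)

theorem isVertexCut_star [Fintype V] {t u : V} (ht : DegreeOne G t) (hu : G.Adj t u) :
    IsVertexCut G {t} {u} (univ \ {t, u}) := by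
  have htu : t ≠ u := G.ne_of_adj hu
  refine ⟨by simpa using htu, by simp, by simp, fun v => ?_, ?_⟩
  · by_cases hvt : v = t <;> by_cases hvu : v = u <;> simp [hvt, hvu]
  · simp only [mem_singleton, mem_sdiff, mem_univ, mem_insert, true_and, not_or]
    rintro _ rfl w hw hadj
    exact hw.2 (ht.unique hadj hu)

theorem cutSparsity_star [Fintype V] {t u : V} {T : Finset V} (ht : t ∈ T) (hu : u ∉ T)
    (hT : 2 ≤ T.card) : cutSparsity {t} {u} (univ \ {t, u}) T = 1 := by
  have hrest : (univ \ {t, u}) ∩ T = T.erase t := by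
    ext v
    by_cases hvu : v = u
    · subst hvu; simp [hu]
    · simp [hvu]
  have hmin : min ({t} ∩ T).card (T.erase t).card = 1 := by
    rw [singleton_inter_of_mem ht, card_singleton, card_erase_of_mem ht]
    omega
  simp [cutSparsity, hrest, hmin, singleton_inter_of_notMem hu]

theorem exists_terminalFree_cut_cutSparsity_eq_one [Fintype V] {T : Finset V}
    (hT : 2 ≤ T.card) (hdeg : ∀ v ∈ T, DegreeOne G v)
    (hnoedge : ∀ v ∈ T, ∀ v' ∈ T, ¬ G.Adj v v') :
    ∃ A' C' B' : Finset V, IsVertexCut G A' C' B' ∧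
      C' ∩ T = ∅ ∧ ((A' ∪ C') ∩ T).Nonempty ∧ ((B' ∪ C') ∩ T).Nonempty ∧
      cutSparsity A' C' B' T = 1 := by
  obtain ⟨t, ht⟩ : T.Nonempty := card_pos.1 (by omega)
  obtain ⟨t', ht', ht't⟩ : ∃ t' ∈ T, t' ≠ t := exists_mem_ne (by omega) t
  obtain ⟨u, hu, -⟩ := hdeg t ht
  have huT : u ∉ T := fun h => hnoedge t ht u h hu
  have ht'u : t' ≠ u := by rintro rfl; exact huT ht'
  refine ⟨{t}, {u}, univ \ {t, u}, isVertexCut_star (hdeg t ht) hu,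
    singleton_inter_of_notMem huT, ⟨t, by simp [ht]⟩, ⟨t', by simp [ht', ht't, ht'u]⟩,
    cutSparsity_star ht huT hT⟩

theorem IsVertexCut.move_to_neighbour_side {A C B S : Finset V} (hcut : IsVertexCut G A C B)
    (hSC : S ⊆ C) (hdeg : ∀ v ∈ S, DegreeOne G v) (hnoedge : ∀ v ∈ S, ∀ v' ∈ S, ¬ G.Adj v v') :
    IsVertexCut G (A ∪ (S \ adjacentTo G B S)) (C \ S) (B ∪ adjacentTo G B S) := by
  obtain ⟨hAC, hAB, hCB, hcov, hE⟩ := hcut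
  rw [disjoint_left] at hAC hAB hCB
  have hedge : ∀ p ∈ A ∪ (S \ adjacentTo G B S), ∀ q ∈ B ∪ adjacentTo G B S, ¬ G.Adj p q := by
    simp only [mem_union, mem_sdiff, mem_adjacentTo]
    rintro p (hpA | ⟨hpS, hpB⟩) q (hqB | ⟨hqS, b, hbB, hqb⟩) hpq
    · exact hE p hpA q hqB hpq
    · -- `q` has degree one, so its neighbours `p ∈ A` and `b ∈ B` coincide
      exact hAB hpA ((hdeg q hqS).unique hpq.symm hqb ▸ hbB)
    · exact hpB ⟨hpS, q, hqB, hpq⟩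
    · exact hnoedge p hpS q hqS hpq
  refine ⟨?_, ?_, ?_, fun v => ?_, hedge⟩ <;>
    simp only [disjoint_left, mem_union, mem_sdiff, mem_adjacentTo] <;> grind

theorem cutSparsity_le_of_subset {A C B A' B' T : Finset V} (hA : A ⊆ A') (hB : B ⊆ B')
    (hC : (C \ T).card ≤ min (A ∩ T).card (B ∩ T).card) :
    cutSparsity A' (C \ T) B' T ≤ cutSparsity A C B T := by
  have hmin : min (A ∩ T).card (B ∩ T).card ≤ min (A' ∩ T).card (B' ∩ T).card :=
    min_le_min (card_le_card (inter_subset_inter_right hA))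
      (card_le_card (inter_subset_inter_right hB))
  have hsplit : (C \ T).card + (C ∩ T).card = C.card := card_sdiff_add_card_inter C T
  rw [cutSparsity, cutSparsity, sdiff_inter_self, card_empty, add_zero, ← hsplit]
  exact div_le_add_div_add hC hmin

end TerminalFreeCut

/-- Let `G` be a graph and `T` a set of at least `3` terminals, each of
degree `1` in `G`, such that no edge of `G` joins two terminals.  Then for every vertex
cut `(A, C, B)` of `G` with `(A ∪ C) ∩ T ≠ ∅` and `(B ∪ C) ∩ T ≠ ∅`, there is a vertex
cut `(A', C', B')` of `G` with `C' ∩ T = ∅`, `(A' ∪ C') ∩ T ≠ ∅` and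
`(B' ∪ C') ∩ T ≠ ∅`, whose sparsity with respect to `T` is at most the sparsity of
`(A, C, B)`.  (Consequently, composing this reduction with an `αAKR`-approximation for
sparsest vertex cut in planar graphs yields an `αAKR`-approximate sparsest cut whose
separator contains no terminals.) -/
theorem sparsest_cut_terminal_free (V : Type) [Fintype V] [DecidableEq V]
    (G : SimpleGraph V) (T : Finset V)
    (hT3 : 3 ≤ T.card)
    (hdeg : ∀ v ∈ T, DegreeOne G v)
    (hnoedge : ∀ v ∈ T, ∀ v' ∈ T, ¬ G.Adj v v')
    (A C B : Finset V) (hcut : IsVertexCut G A C B)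
    (hA : ((A ∪ C) ∩ T).Nonempty) (hB : ((B ∪ C) ∩ T).Nonempty) :
    ∃ A' C' B' : Finset V, IsVertexCut G A' C' B' ∧
      C' ∩ T = ∅ ∧ ((A' ∪ C') ∩ T).Nonempty ∧ ((B' ∪ C') ∩ T).Nonempty ∧
      cutSparsity A' C' B' T ≤ cutSparsity A C B T := by
  by_cases hsmall : (C \ T).card < min (A ∩ T).card (B ∩ T).card
  · obtain ⟨a, ha⟩ : (A ∩ T).Nonempty := Finset.card_pos.1 (by omega)
    obtain ⟨b, hb⟩ : (B ∩ T).Nonempty := Finset.card_pos.1 (by omega)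
    have hcut' := hcut.move_to_neighbour_side (S := C ∩ T) Finset.inter_subset_left
      (fun v hv => hdeg v (Finset.mem_of_mem_inter_right hv))
      (fun v hv v' hv' => hnoedge v (Finset.mem_of_mem_inter_right hv) v'
        (Finset.mem_of_mem_inter_right hv'))
    rw [Finset.sdiff_inter_self_left] at hcut'
    refine ⟨_, _, _, hcut', Finset.sdiff_inter_self T C, ⟨a, by simp_all⟩, ⟨b, by simp_all⟩,
      cutSparsity_le_of_subset Finset.subset_union_left Finset.subset_union_left hsmall.le⟩
  · obtain ⟨A', C', B', hcut', hC', hA', hB', hone⟩ :=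
      exists_terminalFree_cut_cutSparsity_eq_one (by omega) hdeg hnoedge
    refine ⟨A', C', B', hcut', hC', hA', hB', hone ▸ one_le_cutSparsity
      (cutSparsity_denom_pos hA hB) ?_⟩
    have hsplit := Finset.card_sdiff_add_card_inter C T
    omega

end NDP
end
end
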